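/- Lemma 4.5 (classical-expectation version). Let ξ be a real random variable with E[ξ²] ≥ 1 (and E[ξ²] < ∞), and let p ≥ 2 and C > 0. Then E[min{|ξ|^p, C^{p−2}·ξ²}] ≥ min{1, 2C^{p−2}/p}. Moreover, the proof rests on the pointwise inequality min{|x|^{p/2}, C^{p−2}|x|} ≥ min{1, 2C^{p−2}/p}·f₀(x) for all x ∈ ℝ, where f₀(x) := ∫₀^{|x|} (p/2)·min{y^{p/2−1}, 1} dy, together with the facts that f₀ is convex on ℝ and f₀(1) = 1. -/

import Mathlib

/-!
Explicitly, `f₀(x) = |x|^{p/2}` for `|x| ≤ 1` and `f₀(x) = 1 + (p/2)(|x| - 1)` for `|x| ≥ 1`;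
it is convex because it is an even function whose derivative on `[0, ∞)` is nondecreasing.
Bernoulli's inequality gives `f₀(x) ≤ |x|^{p/2}`, and clearly `f₀(x) ≤ (p/2)|x|`; together
these give the pointwise bound. Since `f₀` lies above its tangent line `1 + (p/2)(|x| - 1)`
at `1`, integrating against the law of `ξ²` and using `E[ξ²] ≥ 1` gives the moment bound,
a linearised form of Jensen's inequality `E f₀(ξ²) ≥ f₀(E ξ²) ≥ f₀(1) = 1`.
-/

open MeasureTheory Set

noncomputable section

/-- The auxiliary convex function `f₀(x) = ∫₀^{|x|} (p/2) min{y^{p/2-1}, 1} dy`. -/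
def f0 (p x : ℝ) : ℝ := ∫ y in (0:ℝ)..|x|, p / 2 * min (y ^ (p / 2 - 1)) 1

def f0Deriv (p y : ℝ) : ℝ := p / 2 * min (y ^ (p / 2 - 1)) 1

lemma sq_rpow_div_two (x p : ℝ) : (x ^ 2) ^ (p / 2) = |x| ^ p := by
  rw [← sq_abs, ← Real.rpow_natCast, ← Real.rpow_mul (abs_nonneg x), Nat.cast_ofNat,
    mul_div_cancel₀ p two_ne_zero]

section

variable {p : ℝ}

lemma continuous_f0Deriv (hp : 2 ≤ p) : Continuous (f0Deriv p) :=
  continuous_const.mul ((Real.continuous_rpow_const (by linarith)).min continuous_const)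

lemma f0Deriv_nonneg (hp : 0 ≤ p) {y : ℝ} (hy : 0 ≤ y) : 0 ≤ f0Deriv p y :=
  mul_nonneg (by linarith) (le_min (Real.rpow_nonneg hy _) zero_le_one)

lemma monotoneOn_f0Deriv (hp : 2 ≤ p) : MonotoneOn (f0Deriv p) (Ici 0) := fun a ha b _ hab =>
  mul_le_mul_of_nonneg_left
    (min_le_min_right _ (Real.rpow_le_rpow ha hab (by linarith))) (by linarith)

lemma integral_f0Deriv_of_le_one (hp : 2 ≤ p) {t : ℝ} (ht₀ : 0 ≤ t) (ht₁ : t ≤ 1) :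
    ∫ y in (0:ℝ)..t, f0Deriv p y = t ^ (p / 2) := by
  have hcongr : EqOn (f0Deriv p) (fun y => p / 2 * y ^ (p / 2 - 1)) (uIcc 0 t) := by
    intro y hy
    rw [uIcc_of_le ht₀] at hy
    rw [f0Deriv, min_eq_left (Real.rpow_le_one hy.1 (hy.2.trans ht₁) (by linarith))]
  rw [intervalIntegral.integral_congr hcongr, intervalIntegral.integral_const_mul,
    integral_rpow (Or.inl (by linarith)), sub_add_cancel, Real.zero_rpow (by positivity)]
  field_simp
  ring

lemma integral_f0Deriv_of_one_le (hp : 2 ≤ p) {t : ℝ} (ht : 1 ≤ t) :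
    ∫ y in (0:ℝ)..t, f0Deriv p y = 1 + p / 2 * (t - 1) := by
  have hcongr : EqOn (f0Deriv p) (fun _ => p / 2) (uIcc 1 t) := by
    intro y hy
    rw [uIcc_of_le ht] at hy
    rw [f0Deriv, min_eq_right (Real.one_le_rpow hy.1 (by linarith)), mul_one]
  have hint : ∀ a b, IntervalIntegrable (f0Deriv p) volume a b :=
    fun a b => (continuous_f0Deriv hp).intervalIntegrable a b
  rw [← intervalIntegral.integral_add_adjacent_intervals (hint 0 1) (hint 1 t),
    integral_f0Deriv_of_le_one hp zero_le_one le_rfl, Real.one_rpow,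
    intervalIntegral.integral_congr hcongr, intervalIntegral.integral_const, smul_eq_mul]
  ring

lemma f0_of_abs_le_one (hp : 2 ≤ p) {x : ℝ} (hx : |x| ≤ 1) : f0 p x = |x| ^ (p / 2) :=
  integral_f0Deriv_of_le_one hp (abs_nonneg x) hx

lemma f0_of_one_le_abs (hp : 2 ≤ p) {x : ℝ} (hx : 1 ≤ |x|) : f0 p x = 1 + p / 2 * (|x| - 1) :=
  integral_f0Deriv_of_one_le hp hx

lemma f0_one (hp : 2 ≤ p) : f0 p 1 = 1 := by
  rw [f0_of_abs_le_one hp abs_one.le, abs_one, Real.one_rpow]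

lemma f0_nonneg (hp : 2 ≤ p) (x : ℝ) : 0 ≤ f0 p x := by
  rcases le_total |x| 1 with hx | hx
  · rw [f0_of_abs_le_one hp hx]
    positivity
  · rw [f0_of_one_le_abs hp hx]
    nlinarith

lemma one_add_mul_abs_sub_one_le_abs_rpow (hp : 2 ≤ p) (x : ℝ) :
    1 + p / 2 * (|x| - 1) ≤ |x| ^ (p / 2) := by
  simpa using one_add_mul_self_le_rpow_one_add (s := |x| - 1) (by linarith [abs_nonneg x])
    (p := p / 2) (by linarith)

lemma one_add_mul_abs_sub_one_le_f0 (hp : 2 ≤ p) (x : ℝ) : 1 + p / 2 * (|x| - 1) ≤ f0 p x := by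
  rcases le_total |x| 1 with hx | hx
  · rw [f0_of_abs_le_one hp hx]
    exact one_add_mul_abs_sub_one_le_abs_rpow hp x
  · rw [f0_of_one_le_abs hp hx]

lemma f0_le_abs_rpow (hp : 2 ≤ p) (x : ℝ) : f0 p x ≤ |x| ^ (p / 2) := by
  rcases le_total |x| 1 with hx | hx
  · rw [f0_of_abs_le_one hp hx]
  · rw [f0_of_one_le_abs hp hx]
    exact one_add_mul_abs_sub_one_le_abs_rpow hp x

lemma f0_le_mul_abs (hp : 2 ≤ p) (x : ℝ) : f0 p x ≤ p / 2 * |x| := by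
  rcases le_total |x| 1 with hx | hx
  · rw [f0_of_abs_le_one hp hx]
    calc |x| ^ (p / 2) ≤ |x| ^ (1 : ℝ) :=
          Real.rpow_le_rpow_of_exponent_ge' (abs_nonneg x) hx zero_le_one (by linarith)
      _ ≤ p / 2 * |x| := by rw [Real.rpow_one]; nlinarith [abs_nonneg x]
  · rw [f0_of_one_le_abs hp hx]
    nlinarith

lemma min_mul_f0_le_min (hp : 2 ≤ p) {K : ℝ} (hK : 0 ≤ K) (x : ℝ) :
    min 1 (2 * K / p) * f0 p x ≤ min (|x| ^ (p / 2)) (K * |x|) := by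
  have hf0 := f0_nonneg hp x
  refine le_min ?_ ?_
  · calc min 1 (2 * K / p) * f0 p x ≤ 1 * f0 p x := by gcongr; exact min_le_left _ _
      _ ≤ |x| ^ (p / 2) := by rw [one_mul]; exact f0_le_abs_rpow hp x
  · calc min 1 (2 * K / p) * f0 p x ≤ 2 * K / p * (p / 2 * |x|) := by
          gcongr
          · exact min_le_right _ _
          · exact f0_le_mul_abs hp x
      _ = K * |x| := by field_simp

lemma convexOn_f0 (hp : 2 ≤ p) : ConvexOn ℝ univ (f0 p) := by
  set G : ℝ → ℝ := fun t => ∫ y in (0:ℝ)..t, f0Deriv p y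
  have hG : ∀ t, HasDerivAt G (f0Deriv p t) t := fun t =>
    (continuous_f0Deriv hp).integral_hasStrictDerivAt 0 t |>.hasDerivAt
  have hGcont : ContinuousOn G (Ici 0) := fun t _ => (hG t).continuousAt.continuousWithinAt
  have hGdiff : DifferentiableOn ℝ G (interior (Ici 0)) :=
    fun t _ => (hG t).differentiableAt.differentiableWithinAt
  have hderiv : deriv G = f0Deriv p := funext fun t => (hG t).deriv
  have hGconv : ConvexOn ℝ (Ici 0) G := MonotoneOn.convexOn_of_deriv (convex_Ici 0) hGcont hGdiff
    (by rw [hderiv, interior_Ici]; exact (monotoneOn_f0Deriv hp).mono Ioi_subset_Ici_self)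
  have hGmono : MonotoneOn G (Ici 0) := monotoneOn_of_deriv_nonneg (convex_Ici 0) hGcont hGdiff
    (by rw [hderiv, interior_Ici]; exact fun t ht => f0Deriv_nonneg (by linarith) ht.le)
  have himage : (|·|) '' univ = Ici (0 : ℝ) := by
    ext y
    exact ⟨fun ⟨x, _, hx⟩ => hx ▸ abs_nonneg x, fun hy => ⟨y, trivial, abs_of_nonneg hy⟩⟩
  exact (himage ▸ hGconv).comp (convexOn_univ_norm (E := ℝ)) (himage ▸ hGmono)

lemma le_integral_min_abs_rpow_mul_abs {Ω : Type*} [MeasurableSpace Ω] {P : Measure Ω}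
    [IsProbabilityMeasure P] {X : Ω → ℝ} (hX : Integrable X P) (hX₁ : 1 ≤ ∫ ω, |X ω| ∂P)
    (hp : 2 ≤ p) {K : ℝ} (hK : 0 ≤ K) :
    min 1 (2 * K / p) ≤ ∫ ω, min (|X ω| ^ (p / 2)) (K * |X ω|) ∂P := by
  set m := min 1 (2 * K / p)
  have hm : 0 ≤ m := le_min zero_le_one (by positivity)
  have hdev : Integrable (fun ω => |X ω| - 1) P := hX.abs.sub (integrable_const 1)
  have htangent : Integrable (fun ω => m * (1 + p / 2 * (|X ω| - 1))) P :=
    ((integrable_const 1).add (hdev.const_mul _)).const_mul m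
  have hmin : Integrable (fun ω => min (|X ω| ^ (p / 2)) (K * |X ω|)) P := by
    refine (hX.abs.const_mul K).mono' ?_ (Filter.Eventually.of_forall fun ω => ?_)
    · have : Continuous fun x : ℝ => min (|x| ^ (p / 2)) (K * |x|) :=
        ((Real.continuous_rpow_const (by linarith)).comp continuous_abs).min
          (continuous_abs.const_mul K)
      exact this.comp_aestronglyMeasurable hX.1
    · rw [Real.norm_of_nonneg (le_min (by positivity) (by positivity))]
      exact min_le_right _ _
  calc m ≤ m * (1 + p / 2 * ((∫ ω, |X ω| ∂P) - 1)) :=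
        le_mul_of_one_le_right hm (le_add_of_nonneg_right (mul_nonneg (by linarith) (by linarith)))
    _ = ∫ ω, m * (1 + p / 2 * (|X ω| - 1)) ∂P := by
        rw [integral_const_mul, integral_add (integrable_const 1) (hdev.const_mul _),
          integral_const_mul, integral_sub hX.abs (integrable_const 1)]
        simp
    _ ≤ ∫ ω, min (|X ω| ^ (p / 2)) (K * |X ω|) ∂P := integral_mono htangent hmin fun ω =>
        (mul_le_mul_of_nonneg_left (one_add_mul_abs_sub_one_le_f0 hp _) hm).trans
          (min_mul_f0_le_min hp hK _)

end

theorem truncated_moment_lower_bound_general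
    {Ω : Type} [MeasurableSpace Ω] (P : Measure Ω) [IsProbabilityMeasure P]
    (ξ : Ω → ℝ)
    (hint : Integrable (fun ω => (ξ ω) ^ 2) P)
    (hvar : 1 ≤ ∫ ω, (ξ ω) ^ 2 ∂P)
    (p C : ℝ) (hp : 2 ≤ p) (hC : 0 < C) :
    min 1 (2 * C ^ (p - 2) / p) ≤ ∫ ω, min (|ξ ω| ^ p) (C ^ (p - 2) * (ξ ω) ^ 2) ∂P ∧
    (∀ x : ℝ, min 1 (2 * C ^ (p - 2) / p) * f0 p x ≤ min (|x| ^ (p / 2)) (C ^ (p - 2) * |x|)) ∧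
    ConvexOn ℝ Set.univ (f0 p) ∧
    f0 p 1 = 1 := by
  have hK : 0 ≤ C ^ (p - 2) := Real.rpow_nonneg hC.le _
  refine ⟨?_, min_mul_f0_le_min hp hK, convexOn_f0 hp, f0_one hp⟩
  have h := le_integral_min_abs_rpow_mul_abs hint (by simpa only [abs_sq] using hvar) hp hK
  simpa only [abs_sq, sq_rpow_div_two] using h

/-- **Lemma 4.5** (classical-expectation version): if `E[ξ²] ≥ 1` then
`E[min{|ξ|^p, C^{p-2} ξ²}] ≥ min{1, 2C^{p-2}/p}`; the proof rests on the pointwise bound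
`min{|x|^{p/2}, C^{p-2}|x|} ≥ min{1, 2C^{p-2}/p} f₀(x)`, the convexity of `f₀`,
and `f₀(1) = 1`. -/
theorem truncated_moment_lower_bound
    {Ω : Type} [MeasurableSpace Ω] (P : Measure Ω) [IsProbabilityMeasure P]
    (ξ : Ω → ℝ) (hmeas : Measurable ξ)
    (hint : Integrable (fun ω => (ξ ω) ^ 2) P)
    (hvar : 1 ≤ ∫ ω, (ξ ω) ^ 2 ∂P)
    (p C : ℝ) (hp : 2 ≤ p) (hC : 0 < C) :
    min 1 (2 * C ^ (p - 2) / p) ≤ ∫ ω, min (|ξ ω| ^ p) (C ^ (p - 2) * (ξ ω) ^ 2) ∂P ∧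
    (∀ x : ℝ, min 1 (2 * C ^ (p - 2) / p) * f0 p x ≤ min (|x| ^ (p / 2)) (C ^ (p - 2) * |x|)) ∧
    ConvexOn ℝ Set.univ (f0 p) ∧
    f0 p 1 = 1 :=
  truncated_moment_lower_bound_general P ξ hint hvar p C hp hC

end
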